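/- If the probability density ρ⋆ on ℝᵈ is supported in the closed ball of radius R centered at the origin, then for every t ∈ (0,1) and x ∈ ℝᵈ, the Jacobian of the conditional mean satisfies ‖∇_x E[x⋆ | x_t = x]‖ ≤ 4R² β(t)/(t σ(t)²), and consequently the Jacobian of the drift satisfies ‖∇_x b_t(x)‖ ≤ |σ'(t)/σ(t)| + 4R² (β(t)/(t σ(t)²)) |β'(t) − β(t)σ'(t)/σ(t)|. -/

import Mathlib

/-!
With `c = β(t) / (t σ(t)²)`, the conditional mean `E[x⋆ | x_t = x]` is the mean of the
exponential tilt `e^{⟪y, c x⟫} g(y) dy` of the density `g(y) = ρ⋆(y) e^{-β(t)²|y|²/(2tσ(t)²)}`,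
which is supported in the ball of radius `R`. Shifting the tilt parameter by `v` multiplies the
tilted density pointwise by `e^{⟪y, v⟫} ∈ [e^{-R‖v‖}, e^{R‖v‖}]`, so the tilted mean `m` satisfies
`‖m(x + v) - m(x)‖ ≤ 2R² ‖v‖ e^{2R‖v‖}` and is locally `4R²`-Lipschitz. A map that is locally
`C`-Lipschitz at a point has `‖fderiv‖ ≤ C` there (its `fderiv` is `0` if it is not
differentiable), and the drift is the affine combination
`(σ'/σ) x + (β' - β σ'/σ) E[x⋆ | x_t = x]`.
-/

open MeasureTheory Real Filter Set
open scoped Topology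

noncomputable section

/-- The Gaussian reweighting factor appearing in the conditional mean
`E[x⋆ | x_t = x]` for the stochastic interpolant `x_t = β(t) x⋆ + σ(t) √t z`. -/
def interpWeight {d : ℕ} (β σ : ℝ → ℝ) (t : ℝ) (x y : EuclideanSpace ℝ (Fin d)) : ℝ :=
  Real.exp (-(β t) ^ 2 * ‖y‖ ^ 2 / (2 * t * σ t ^ 2) + β t * (inner ℝ y x : ℝ) / (t * σ t ^ 2))

/-- The conditional mean `E[x⋆ | x_t = x]`. -/
def condMean {d : ℕ} (ρ : EuclideanSpace ℝ (Fin d) → ℝ) (β σ : ℝ → ℝ) (t : ℝ)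
    (x : EuclideanSpace ℝ (Fin d)) : EuclideanSpace ℝ (Fin d) :=
  (∫ y, ρ y * interpWeight β σ t x y)⁻¹ • ∫ y, (ρ y * interpWeight β σ t x y) • y

/-- The drift `b_t(x) = β'(t) E[x⋆|x_t=x] + (σ'(t)/σ(t)) (x − β(t) E[x⋆|x_t=x])`. -/
def drift {d : ℕ} (ρ : EuclideanSpace ℝ (Fin d) → ℝ) (β σ : ℝ → ℝ) (t : ℝ)
    (x : EuclideanSpace ℝ (Fin d)) : EuclideanSpace ℝ (Fin d) :=
  deriv β t • condMean ρ β σ t x + (deriv σ t / σ t) • (x - β t • condMean ρ β σ t x)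

open scoped RealInnerProductSpace

lemma abs_exp_sub_one_le_mul_exp_abs (a : ℝ) : |exp a - 1| ≤ |a| * exp |a| := by
  rcases le_total 0 a with ha | ha
  · have h := add_one_le_exp (-a)
    rw [exp_neg] at h
    rw [abs_of_nonneg ha, abs_of_nonneg (by linarith [one_le_exp ha])]
    nlinarith [exp_pos a, mul_inv_cancel₀ (exp_pos a).ne']
  · rw [abs_of_nonpos ha, abs_of_nonpos (by linarith [exp_le_one_iff.2 ha])]
    nlinarith [add_one_le_exp a, one_le_exp (neg_nonneg.2 ha)]

lemma norm_le_of_mem_support {F : Type*} [NormedAddCommGroup F] {g : F → ℝ} {R : ℝ}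
    (hsupp : Function.support g ⊆ Metric.closedBall 0 R) {y : F} (hy : g y ≠ 0) : ‖y‖ ≤ R := by
  simpa using hsupp hy

section TiltedMean

variable {E : Type*} [NormedAddCommGroup E] [InnerProductSpace ℝ E] {g : E → ℝ} {R : ℝ}

def expTilt (g : E → ℝ) (x y : E) : ℝ := g y * exp ⟪y, x⟫

@[simp]
lemma expTilt_zero (g : E → ℝ) : expTilt g 0 = g := by
  ext y; simp [expTilt]

lemma support_expTilt (g : E → ℝ) (x : E) :
    Function.support (expTilt g x) = Function.support g := by
  ext y; simp [expTilt]

lemma expTilt_eq_mul_exp (g : E → ℝ) (x x' y : E) :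
    expTilt g x y = expTilt g x' y * exp ⟪y, x - x'⟫ := by
  rw [expTilt, expTilt, mul_assoc, ← exp_add, inner_sub_right, add_sub_cancel]

lemma expTilt_nonneg (hg : 0 ≤ g) (x y : E) : 0 ≤ expTilt g x y :=
  mul_nonneg (hg y) (exp_pos _).le

lemma abs_inner_le_of_mem_support (hsupp : Function.support g ⊆ Metric.closedBall 0 R) {y : E}
    (hy : g y ≠ 0) (v : E) : |⟪y, v⟫| ≤ R * ‖v‖ :=
  (abs_real_inner_le_norm y v).trans
    (mul_le_mul_of_nonneg_right (norm_le_of_mem_support hsupp hy) (norm_nonneg v))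

section Pointwise

variable (hg : 0 ≤ g) (hsupp : Function.support g ⊆ Metric.closedBall 0 R)
include hg hsupp

lemma expTilt_le (x x' y : E) : expTilt g x y ≤ exp (R * ‖x - x'‖) * expTilt g x' y := by
  by_cases hy : g y = 0
  · simp [expTilt, hy]
  rw [expTilt_eq_mul_exp g x x', mul_comm]
  gcongr
  · exact expTilt_nonneg hg x' y
  · exact (le_abs_self _).trans (abs_inner_le_of_mem_support hsupp hy _)

lemma abs_expTilt_sub_le (x x' y : E) :
    |expTilt g x y - expTilt g x' y| ≤
      R * ‖x - x'‖ * exp (R * ‖x - x'‖) * expTilt g x' y := by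
  by_cases hy : g y = 0
  · simp [expTilt, hy]
  have ha := abs_inner_le_of_mem_support hsupp hy (x - x')
  calc |expTilt g x y - expTilt g x' y|
      = |exp ⟪y, x - x'⟫ - 1| * expTilt g x' y := by
        rw [expTilt_eq_mul_exp g x x', ← mul_sub_one, abs_mul, mul_comm,
          abs_of_nonneg (expTilt_nonneg hg x' y)]
    _ ≤ R * ‖x - x'‖ * exp (R * ‖x - x'‖) * expTilt g x' y := by
        gcongr
        · exact expTilt_nonneg hg x' y
        · exact (abs_exp_sub_one_le_mul_exp_abs _).trans
            (mul_le_mul ha (exp_le_exp.2 ha) (exp_pos _).le ((abs_nonneg _).trans ha))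

lemma norm_expTilt_smul_le (x y : E) : ‖expTilt g x y • y‖ ≤ R * expTilt g x y := by
  by_cases hy : g y = 0
  · simp [expTilt, hy]
  rw [norm_smul, Real.norm_of_nonneg (expTilt_nonneg hg x y), mul_comm]
  gcongr
  · exact expTilt_nonneg hg x y
  · exact norm_le_of_mem_support hsupp hy

end Pointwise

variable [MeasurableSpace E] {μ : Measure E}

def tiltedMean (μ : Measure E) (g : E → ℝ) (x : E) : E :=
  (∫ y, expTilt g x y ∂μ)⁻¹ • ∫ y, expTilt g x y • y ∂μ

variable [OpensMeasurableSpace E]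
  (hg : 0 ≤ g) (hsupp : Function.support g ⊆ Metric.closedBall 0 R) (hgi : Integrable g μ)
include hg hsupp hgi

lemma integrable_expTilt (x : E) : Integrable (expTilt g x) μ := by
  refine (hgi.const_mul (exp (R * ‖x - 0‖))).mono'
    (hgi.aestronglyMeasurable.mul (by fun_prop : Continuous fun y => exp ⟪y, x⟫).aestronglyMeasurable)
    (Eventually.of_forall fun y => ?_)
  rw [Real.norm_of_nonneg (expTilt_nonneg hg x y)]
  simpa using expTilt_le hg hsupp x 0 y

lemma norm_integral_expTilt_smul_sub_le {F : Type*} [NormedAddCommGroup F] [NormedSpace ℝ F]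
    {h : E → F} {B : ℝ} (hh : ∀ x, Integrable (fun y => expTilt g x y • h y) μ)
    (hB : ∀ y, g y ≠ 0 → ‖h y‖ ≤ B) (x x' : E) :
    ‖∫ y, expTilt g x y • h y ∂μ - ∫ y, expTilt g x' y • h y ∂μ‖ ≤
      B * (R * ‖x - x'‖ * exp (R * ‖x - x'‖)) * ∫ y, expTilt g x' y ∂μ := by
  rw [← integral_sub (hh x) (hh x'), ← integral_const_mul]
  refine norm_integral_le_of_norm_le ((integrable_expTilt hg hsupp hgi x').const_mul _)
    (Eventually.of_forall fun y => ?_)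
  by_cases hy : g y = 0
  · simp [expTilt, hy]
  rw [← sub_smul, norm_smul, Real.norm_eq_abs, mul_comm B, mul_assoc, mul_comm B, ← mul_assoc]
  exact mul_le_mul (abs_expTilt_sub_le hg hsupp x x' y) (hB y hy) (norm_nonneg _)
    ((abs_nonneg _).trans (abs_expTilt_sub_le hg hsupp x x' y))

lemma integral_expTilt_pos (hμ : μ (Function.support g) ≠ 0) (x : E) :
    0 < ∫ y, expTilt g x y ∂μ := by
  rw [integral_pos_iff_support_of_nonneg (expTilt_nonneg hg x) (integrable_expTilt hg hsupp hgi x),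
    support_expTilt]
  exact pos_iff_ne_zero.2 hμ

variable [SecondCountableTopology E]

lemma integrable_expTilt_smul (x : E) : Integrable (fun y => expTilt g x y • y) μ :=
  ((integrable_expTilt hg hsupp hgi x).const_mul R).mono'
    ((integrable_expTilt hg hsupp hgi x).aestronglyMeasurable.smul aestronglyMeasurable_id)
    (Eventually.of_forall (norm_expTilt_smul_le hg hsupp x))

lemma norm_tiltedMean_sub_le (hμ : μ (Function.support g) ≠ 0) (x x' : E) :
    ‖tiltedMean μ g x - tiltedMean μ g x'‖ ≤
      2 * R ^ 2 * ‖x - x'‖ * exp (2 * (R * ‖x - x'‖)) := by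
  obtain ⟨y₀, hy₀⟩ := nonempty_of_measure_ne_zero hμ
  have hR : 0 ≤ R := (norm_nonneg y₀).trans (norm_le_of_mem_support hsupp hy₀)
  set K := R * ‖x - x'‖ with hK
  have hK0 : 0 ≤ K := by positivity
  set Z := ∫ y, expTilt g x y ∂μ
  set Z' := ∫ y, expTilt g x' y ∂μ
  set F := ∫ y, expTilt g x y • y ∂μ
  set F' := ∫ y, expTilt g x' y • y ∂μ
  have hZ : 0 < Z := integral_expTilt_pos hg hsupp hgi hμ x
  have hZ' : 0 < Z' := integral_expTilt_pos hg hsupp hgi hμ x'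
  have hF : ‖F - F'‖ ≤ R * (K * exp K) * Z' :=
    norm_integral_expTilt_smul_sub_le hg hsupp hgi (integrable_expTilt_smul hg hsupp hgi)
      (fun y hy => norm_le_of_mem_support hsupp hy) x x'
  have hZd : |Z' - Z| ≤ K * exp K * Z' := by
    simpa [abs_sub_comm] using norm_integral_expTilt_smul_sub_le hg hsupp hgi (h := fun _ => (1 : ℝ))
      (by simpa using integrable_expTilt hg hsupp hgi) (fun _ _ => le_rfl) x x'
  have hF' : ‖F'‖ ≤ R * Z' := by
    rw [← integral_const_mul]
    exact norm_integral_le_of_norm_le ((integrable_expTilt hg hsupp hgi x').const_mul R)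
      (Eventually.of_forall (norm_expTilt_smul_le hg hsupp x'))
  have hZZ : Z' ≤ exp K * Z := by
    rw [← integral_const_mul, hK, norm_sub_rev]
    exact integral_mono (integrable_expTilt hg hsupp hgi x')
      ((integrable_expTilt hg hsupp hgi x).const_mul _) (expTilt_le hg hsupp x' x)
  have hsplit : tiltedMean μ g x - tiltedMean μ g x' = Z⁻¹ • (F - F') + (Z⁻¹ - Z'⁻¹) • F' := by
    simp only [tiltedMean, Z, Z', F, F']
    module
  calc ‖tiltedMean μ g x - tiltedMean μ g x'‖
      ≤ ‖Z⁻¹ • (F - F')‖ + ‖(Z⁻¹ - Z'⁻¹) • F'‖ := hsplit ▸ norm_add_le _ _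
    _ = (‖F - F'‖ + |Z' - Z| / Z' * ‖F'‖) / Z := by
        rw [norm_smul, norm_smul, inv_sub_inv hZ.ne' hZ'.ne', Real.norm_eq_abs, Real.norm_eq_abs,
          abs_inv, abs_div, abs_of_pos hZ, abs_of_pos (mul_pos hZ hZ')]
        field_simp
    _ ≤ (R * (K * exp K) * Z' + K * exp K * Z' / Z' * (R * Z')) / Z := by gcongr
    _ = 2 * R * K * exp K * Z' / Z := by field_simp; ring
    _ ≤ 2 * R * K * exp K * exp K := by
        rw [div_le_iff₀ hZ]
        linarith [mul_le_mul_of_nonneg_left hZZ (by positivity : 0 ≤ 2 * R * K * exp K)]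
    _ = 2 * R ^ 2 * ‖x - x'‖ * exp (2 * K) := by rw [two_mul K, exp_add]; ring

lemma eventually_norm_tiltedMean_sub_le (hμ : μ (Function.support g) ≠ 0) (x : E) :
    ∀ᶠ x' in 𝓝 x, ‖tiltedMean μ g x' - tiltedMean μ g x‖ ≤ 4 * R ^ 2 * ‖x' - x‖ := by
  have hlim : Tendsto (fun x' => exp (2 * (R * ‖x' - x‖))) (𝓝 x) (𝓝 1) := by
    simpa using ((by fun_prop : Continuous fun x' => exp (2 * (R * ‖x' - x‖))).tendsto x)
  filter_upwards [hlim.eventually (eventually_le_nhds one_lt_two)] with x' hx'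
  calc ‖tiltedMean μ g x' - tiltedMean μ g x‖
      ≤ 2 * R ^ 2 * ‖x' - x‖ * exp (2 * (R * ‖x' - x‖)) :=
        norm_tiltedMean_sub_le hg hsupp hgi hμ x' x
    _ ≤ 2 * R ^ 2 * ‖x' - x‖ * 2 := by gcongr
    _ = 4 * R ^ 2 * ‖x' - x‖ := by ring

end TiltedMean

lemma eventually_norm_smul_add_smul_sub_le {E : Type*} [NormedAddCommGroup E] [NormedSpace ℝ E]
    {f : E → E} {x : E} {L : ℝ} (a b : ℝ)
    (hf : ∀ᶠ x' in 𝓝 x, ‖f x' - f x‖ ≤ L * ‖x' - x‖) :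
    ∀ᶠ x' in 𝓝 x, ‖(a • x' + b • f x') - (a • x + b • f x)‖ ≤ (|a| + |b| * L) * ‖x' - x‖ := by
  filter_upwards [hf] with x' hx'
  calc ‖(a • x' + b • f x') - (a • x + b • f x)‖
      = ‖a • (x' - x) + b • (f x' - f x)‖ := by congr 1; module
    _ ≤ |a| * ‖x' - x‖ + |b| * ‖f x' - f x‖ := by
        refine (norm_add_le _ _).trans_eq ?_
        rw [norm_smul, norm_smul, Real.norm_eq_abs, Real.norm_eq_abs]
    _ ≤ |a| * ‖x' - x‖ + |b| * (L * ‖x' - x‖) := by gcongr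
    _ = (|a| + |b| * L) * ‖x' - x‖ := by ring

section Interpolant

variable {d : ℕ} {ρ : EuclideanSpace ℝ (Fin d) → ℝ} {β σ : ℝ → ℝ} {t R : ℝ}

lemma condMean_eq_tiltedMean (x : EuclideanSpace ℝ (Fin d)) :
    condMean ρ β σ t x =
      tiltedMean volume (fun y => ρ y * exp (-(β t) ^ 2 * ‖y‖ ^ 2 / (2 * t * σ t ^ 2)))
        ((β t / (t * σ t ^ 2)) • x) := by
  have hweight : ∀ y, ρ y * interpWeight β σ t x y =
      expTilt (fun y => ρ y * exp (-(β t) ^ 2 * ‖y‖ ^ 2 / (2 * t * σ t ^ 2)))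
        ((β t / (t * σ t ^ 2)) • x) y := by
    intro y
    simp only [interpWeight, expTilt, real_inner_smul_right, exp_add]
    ring_nf
  simp only [condMean, tiltedMean, hweight]

lemma drift_eq_smul_add_smul_condMean (x : EuclideanSpace ℝ (Fin d)) :
    drift ρ β σ t x =
      (deriv σ t / σ t) • x + (deriv β t - β t * deriv σ t / σ t) • condMean ρ β σ t x := by
  simp only [drift]
  module

lemma eventually_norm_condMean_sub_le (hρnn : ∀ y, 0 ≤ ρ y) (hρ1 : ∫ y, ρ y = 1)
    (hsupp : Function.support ρ ⊆ Metric.closedBall 0 R) (ht : 0 < t) (hβ : 0 ≤ β t)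
    (x : EuclideanSpace ℝ (Fin d)) :
    ∀ᶠ x' in 𝓝 x, ‖condMean ρ β σ t x' - condMean ρ β σ t x‖ ≤
      4 * R ^ 2 * (β t / (t * σ t ^ 2)) * ‖x' - x‖ := by
  set c := β t / (t * σ t ^ 2)
  set g := fun y => ρ y * exp (-(β t) ^ 2 * ‖y‖ ^ 2 / (2 * t * σ t ^ 2))
  have hρi : Integrable ρ := Integrable.of_integral_ne_zero (by simp [hρ1])
  have hg : 0 ≤ g := fun y => mul_nonneg (hρnn y) (exp_pos _).le
  have hgsupp : Function.support g = Function.support ρ := by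
    ext y; simp [g]
  have hgi : Integrable g := by
    refine hρi.mono' (hρi.aestronglyMeasurable.mul (by fun_prop)) (Eventually.of_forall fun y => ?_)
    rw [norm_mul, Real.norm_of_nonneg (hρnn y), Real.norm_of_nonneg (exp_pos _).le]
    refine mul_le_of_le_one_right (hρnn y) (exp_le_one_iff.2 ?_)
    exact div_nonpos_of_nonpos_of_nonneg (by nlinarith [sq_nonneg (β t * ‖y‖)]) (by positivity)
  have hμ : volume (Function.support g) ≠ 0 := by
    rw [hgsupp, ← pos_iff_ne_zero, ← integral_pos_iff_support_of_nonneg hρnn hρi, hρ1]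
    exact one_pos
  have hc : 0 ≤ c := by positivity
  have hsmul : Tendsto (fun x' => c • x') (𝓝 x) (𝓝 (c • x)) := (continuous_const_smul c).tendsto x
  filter_upwards [hsmul.eventually (eventually_norm_tiltedMean_sub_le hg (hgsupp ▸ hsupp) hgi hμ
    (c • x))] with x' hx'
  rw [condMean_eq_tiltedMean, condMean_eq_tiltedMean]
  calc _ ≤ 4 * R ^ 2 * ‖c • x' - c • x‖ := hx'
    _ = 4 * R ^ 2 * c * ‖x' - x‖ := by rw [← smul_sub, norm_smul, Real.norm_of_nonneg hc]; ring

end Interpolant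

theorem jacobian_bounds_bounded_support_general {d : ℕ} (ρ : EuclideanSpace ℝ (Fin d) → ℝ)
    (β σ : ℝ → ℝ)
    (hβC : ContDiff ℝ 1 β)
    (hβ0 : β 0 = 0)
    (hβ' : ∀ t ∈ Icc (0:ℝ) 1, 0 < deriv β t)
    (hρnn : ∀ y, 0 ≤ ρ y) (hρ1 : ∫ y, ρ y = 1)
    (R : ℝ)
    (hsupp : Function.support ρ ⊆ Metric.closedBall 0 R) :
    ∀ t ∈ Ioo (0:ℝ) 1, ∀ x : EuclideanSpace ℝ (Fin d),
      ‖fderiv ℝ (fun x' => condMean ρ β σ t x') x‖ ≤ 4 * R ^ 2 * β t / (t * σ t ^ 2) ∧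
      ‖fderiv ℝ (fun x' => drift ρ β σ t x') x‖ ≤
        |deriv σ t / σ t| +
          4 * R ^ 2 * (β t / (t * σ t ^ 2)) * |deriv β t - β t * deriv σ t / σ t| := by
  rintro t ⟨ht0, ht1⟩ x
  have hβt : 0 ≤ β t := by
    have hmono : StrictMonoOn β (Icc 0 1) := strictMonoOn_of_deriv_pos (convex_Icc 0 1)
      hβC.continuous.continuousOn fun z hz => hβ' z (interior_subset hz)
    exact hβ0 ▸ (hmono ⟨le_rfl, zero_le_one⟩ ⟨ht0.le, ht1.le⟩ ht0).le
  have hcond := eventually_norm_condMean_sub_le (σ := σ) hρnn hρ1 hsupp ht0 hβt x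
  refine ⟨(norm_fderiv_le_of_lip' ℝ (by positivity) hcond).trans_eq (by ring), ?_⟩
  have hdrift := eventually_norm_smul_add_smul_sub_le
    (deriv σ t / σ t) (deriv β t - β t * deriv σ t / σ t) hcond
  simp only [← drift_eq_smul_add_smul_condMean] at hdrift
  exact (norm_fderiv_le_of_lip' ℝ (by positivity) hdrift).trans_eq (by ring)

/-- for targets supported in the closed ball of radius `R`,
`‖∇_x E[x⋆|x_t=x]‖ ≤ 4R² β(t)/(t σ(t)²)` and the corresponding bound on `‖∇_x b_t(x)‖`. -/
theorem jacobian_bounds_bounded_support {d : ℕ} (ρ : EuclideanSpace ℝ (Fin d) → ℝ)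
    (β σ : ℝ → ℝ)
    (hβC : ContDiff ℝ 1 β) (hσC : ContDiff ℝ 1 σ)
    (hβ0 : β 0 = 0) (hβ1 : β 1 = 1) (hσ0 : 0 < σ 0) (hσ1 : σ 1 = 0)
    (hβ' : ∀ t ∈ Icc (0:ℝ) 1, 0 < deriv β t)
    (hσ' : ∀ t ∈ Icc (0:ℝ) 1, deriv σ t < 0)
    (hρnn : ∀ y, 0 ≤ ρ y) (hρ1 : ∫ y, ρ y = 1)
    (R : ℝ) (hR : 0 ≤ R)
    (hsupp : Function.support ρ ⊆ Metric.closedBall 0 R) :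
    ∀ t ∈ Ioo (0:ℝ) 1, ∀ x : EuclideanSpace ℝ (Fin d),
      ‖fderiv ℝ (fun x' => condMean ρ β σ t x') x‖ ≤ 4 * R ^ 2 * β t / (t * σ t ^ 2) ∧
      ‖fderiv ℝ (fun x' => drift ρ β σ t x') x‖ ≤
        |deriv σ t / σ t| +
          4 * R ^ 2 * (β t / (t * σ t ^ 2)) * |deriv β t - β t * deriv σ t / σ t| :=
  jacobian_bounds_bounded_support_general ρ β σ hβC hβ0 hβ' hρnn hρ1 R hsupp
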